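/- arXiv:1502.06367 — 3 statements merged into one kernel-verified Lean document; each statement's English description precedes it below -/
import Mathlib

section
/- Let M, k, a, b be natural numbers with k ≥ 1, k ≥ 4M, k ≤ (k−2M)², and a ≤ b + 2M. Then log [a]_k ≤ 2·log [b]_{k−2M}. -/
/-- Cutoff function: `[m]_n = m` if `m > n`, and `0` otherwise. -/
def cutoff (m n : ℕ) : ℕ := if m > n then m else 0

theorem stmt_1 (M k a b : ℕ) (hk1 : k ≥ 1) (hk2 : k ≥ 4 * M)
    (hk3 : k ≤ (k - 2 * M) ^ 2) (hab : a ≤ b + 2 * M) :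
    Real.log (cutoff a k) ≤ 2 * Real.log (cutoff b (k - 2 * M)) := by
  unfold cutoff
  split_ifs with h1 h2 h2
  · -- a > k and b > k - 2M
    have hb1 : 2 * M + 1 ≤ b := by omega
    have hab2 : a ≤ b ^ 2 := by nlinarith
    have hbpos : (0:ℝ) < a := by exact_mod_cast (by omega : 0 < a)
    calc Real.log a ≤ Real.log ((b:ℝ) ^ 2) := by
          apply Real.log_le_log hbpos
          exact_mod_cast hab2
      _ = 2 * Real.log b := by rw [Real.log_pow]; push_cast; ring
  · omega
  · simp only [Nat.cast_zero, Real.log_zero]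
    have hb1 : (1:ℝ) ≤ b := by exact_mod_cast (by omega : 1 ≤ b)
    nlinarith [Real.log_nonneg hb1]
  · simp
end

section
/- Let I and J be finite index sets, and let M, k be natural numbers with k ≥ 1, k ≥ 4M, and k ≤ (k−2M)². Let a, b : I ⊕ J → ℕ be functions such that for every index w, if a(w) > k then a(w) ≤ b(w) + 2M. Then Σ_{i∈I} [a(i)]_k + Σ_{j∈J} log [a(j)]_k ≤ 2·( Σ_{i∈I} [b(i)]_{k−2M} + Σ_{j∈J} log [b(j)]_{k−2M} ). -/
lemma cutoff_lin (M k m n : ℕ) (hk1 : k ≥ 1) (hk2 : k ≥ 4 * M)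
    (h : m > k → m ≤ n + 2 * M) :
    (cutoff m k : ℝ) ≤ 2 * (cutoff n (k - 2 * M) : ℝ) := by
  unfold cutoff
  split_ifs with h1 h2 h2
  · have hm := h h1
    have : m ≤ 2 * n := by omega
    exact_mod_cast this
  · exact absurd (h h1) (by omega)
  · push_cast; positivity
  · simp

lemma cutoff_log (M k m n : ℕ) (hk1 : k ≥ 1) (hk2 : k ≥ 4 * M)
    (h : m > k → m ≤ n + 2 * M) :
    Real.log (cutoff m k) ≤ 2 * Real.log (cutoff n (k - 2 * M)) := by
  unfold cutoff
  split_ifs with h1 h2 h2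
  · have hm := h h1
    have hn2 : 2 ≤ n := by omega
    have hmn : m ≤ n ^ 2 := by nlinarith
    have hmpos : (0 : ℝ) < m := by exact_mod_cast (by omega : 0 < m)
    calc Real.log m ≤ Real.log ((n : ℝ) ^ 2) := by
          apply Real.log_le_log hmpos
          exact_mod_cast hmn
      _ = 2 * Real.log n := by
          rw [Real.log_pow]; push_cast; ring
  · exact absurd (h h1) (by omega)
  · have : (0 : ℝ) ≤ Real.log n := Real.log_natCast_nonneg n
    simpa using by linarith
  · simp

theorem stmt_5 (I J : Type*) [Fintype I] [Fintype J] (M k : ℕ)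
    (hk1 : k ≥ 1) (hk2 : k ≥ 4 * M) (hk3 : k ≤ (k - 2 * M) ^ 2)
    (a b : I ⊕ J → ℕ) (hab : ∀ w, a w > k → a w ≤ b w + 2 * M) :
    (∑ i : I, (cutoff (a (Sum.inl i)) k : ℝ)) +
      ∑ j : J, Real.log (cutoff (a (Sum.inr j)) k) ≤
    2 * ((∑ i : I, (cutoff (b (Sum.inl i)) (k - 2 * M) : ℝ)) +
      ∑ j : J, Real.log (cutoff (b (Sum.inr j)) (k - 2 * M))) := by
  rw [mul_add, Finset.mul_sum, Finset.mul_sum]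
  apply add_le_add
  · exact Finset.sum_le_sum fun i _ =>
      cutoff_lin M k _ _ hk1 hk2 (hab (Sum.inl i))
  · exact Finset.sum_le_sum fun j _ =>
      cutoff_log M k _ _ hk1 hk2 (hab (Sum.inr j))
end

section
/- Let I and J be finite index sets and k a natural number with k ≥ 4; set l = ⌊k/2⌋. Let c, a₁, b₁, a₂, b₂ : I ⊕ J → ℕ be functions such that for every index w, either c(w) ≤ a₁(w) + b₁(w) or c(w) ≤ a₂(w) + b₂(w). Then Σ_{i∈I} [c(i)]_k + Σ_{j∈J} log [c(j)]_k ≤ 2·( Σ_{i∈I} [a₁(i)]_l + Σ_{j∈J} log [a₁(j)]_l + Σ_{i∈I} [b₁(i)]_l + Σ_{j∈J} log [b₁(j)]_l + Σ_{i∈I} [a₂(i)]_l + Σ_{j∈J} log [a₂(j)]_l + Σ_{i∈I} [b₂(i)]_l + Σ_{j∈J} log [b₂(j)]_l ). -/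
private lemma lognn (m : ℕ) : 0 ≤ Real.log m := by
  rcases m with _ | m
  · simp
  · exact Real.log_nonneg (by exact_mod_cast Nat.succ_le_succ (Nat.zero_le m))

private lemma cutoff_le (m n : ℕ) : cutoff m n ≤ m := by
  unfold cutoff; split <;> omega

private lemma lin_key {k l : ℕ} (hk : 4 ≤ k) (hl : l = k / 2)
    {cw aw bw : ℕ} (h : cw ≤ aw + bw) :
    (cutoff cw k : ℝ) ≤ 2 * ((cutoff aw l : ℝ) + (cutoff bw l : ℝ)) := by
  by_cases hc : cw > k
  · have h2l : 2 * l ≤ k := by omega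
    rcases le_total aw bw with hab | hab
    · have hbw : bw > l := by omega
      have : cutoff bw l = bw := by unfold cutoff; simp [hbw]
      have hcc : cutoff cw k = cw := by unfold cutoff; simp [hc]
      rw [hcc, this]
      have : (cw : ℝ) ≤ 2 * bw := by exact_mod_cast (by omega : cw ≤ 2 * bw)
      have ha : (0:ℝ) ≤ (cutoff aw l : ℕ) := by positivity
      nlinarith
    · have haw : aw > l := by omega
      have : cutoff aw l = aw := by unfold cutoff; simp [haw]
      have hcc : cutoff cw k = cw := by unfold cutoff; simp [hc]
      rw [hcc, this]
      have : (cw : ℝ) ≤ 2 * aw := by exact_mod_cast (by omega : cw ≤ 2 * aw)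
      have hb : (0:ℝ) ≤ (cutoff bw l : ℕ) := by positivity
      nlinarith
  · have : cutoff cw k = 0 := by unfold cutoff; simp [hc]
    rw [this]
    push_cast
    positivity

private lemma log_key {k l : ℕ} (hk : 4 ≤ k) (hl : l = k / 2)
    {cw aw bw : ℕ} (h : cw ≤ aw + bw) :
    Real.log (cutoff cw k) ≤ 2 * (Real.log (cutoff aw l) + Real.log (cutoff bw l)) := by
  by_cases hc : cw > k
  · have hcc : cutoff cw k = cw := by unfold cutoff; simp [hc]
    rw [hcc]
    have h2l : 2 * l ≤ k := by omega
    have hl2 : 2 ≤ l := by omega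
    rcases le_total aw bw with hab | hab
    · have hbw : bw > l := by omega
      have hb : cutoff bw l = bw := by unfold cutoff; simp [hbw]
      have h1 : Real.log cw ≤ Real.log (2 * bw) := by
        apply Real.log_le_log (by exact_mod_cast (by omega : 0 < cw))
        exact_mod_cast (by omega : cw ≤ 2 * bw)
      have h2 : Real.log (2 * (bw:ℝ)) = Real.log 2 + Real.log bw := by
        rw [Real.log_mul (by norm_num) (by exact_mod_cast (by omega : bw ≠ 0))]
      have h3 : Real.log 2 ≤ Real.log bw :=
        Real.log_le_log (by norm_num) (by exact_mod_cast (by omega : 2 ≤ bw))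
      have h4 : 0 ≤ Real.log (cutoff aw l) := lognn _
      rw [hb]
      push_cast at h1 ⊢
      linarith
    · have haw : aw > l := by omega
      have ha : cutoff aw l = aw := by unfold cutoff; simp [haw]
      have h1 : Real.log cw ≤ Real.log (2 * aw) := by
        apply Real.log_le_log (by exact_mod_cast (by omega : 0 < cw))
        exact_mod_cast (by omega : cw ≤ 2 * aw)
      have h2 : Real.log (2 * (aw:ℝ)) = Real.log 2 + Real.log aw := by
        rw [Real.log_mul (by norm_num) (by exact_mod_cast (by omega : aw ≠ 0))]
      have h3 : Real.log 2 ≤ Real.log aw :=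
        Real.log_le_log (by norm_num) (by exact_mod_cast (by omega : 2 ≤ aw))
      have h4 : 0 ≤ Real.log (cutoff bw l) := lognn _
      rw [ha]
      push_cast at h1 ⊢
      linarith
  · have : cutoff cw k = 0 := by unfold cutoff; simp [hc]
    rw [this]
    simp only [Nat.cast_zero, Real.log_zero]
    have := lognn (cutoff aw l); have := lognn (cutoff bw l)
    linarith

theorem stmt_6 (I J : Type*) [Fintype I] [Fintype J] (k : ℕ) (hk : k ≥ 4)
    (l : ℕ) (hl : l = k / 2)
    (c a₁ b₁ a₂ b₂ : I ⊕ J → ℕ)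
    (h : ∀ w, c w ≤ a₁ w + b₁ w ∨ c w ≤ a₂ w + b₂ w) :
    (∑ i : I, (cutoff (c (Sum.inl i)) k : ℝ)) +
      ∑ j : J, Real.log (cutoff (c (Sum.inr j)) k) ≤
    2 * ((∑ i : I, (cutoff (a₁ (Sum.inl i)) l : ℝ)) +
          (∑ j : J, Real.log (cutoff (a₁ (Sum.inr j)) l)) +
         (∑ i : I, (cutoff (b₁ (Sum.inl i)) l : ℝ)) +
          (∑ j : J, Real.log (cutoff (b₁ (Sum.inr j)) l)) +
         (∑ i : I, (cutoff (a₂ (Sum.inl i)) l : ℝ)) +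
          (∑ j : J, Real.log (cutoff (a₂ (Sum.inr j)) l)) +
         (∑ i : I, (cutoff (b₂ (Sum.inl i)) l : ℝ)) +
          (∑ j : J, Real.log (cutoff (b₂ (Sum.inr j)) l))) := by
  have hI : ∀ i : I, (cutoff (c (Sum.inl i)) k : ℝ) ≤
      2 * ((cutoff (a₁ (Sum.inl i)) l : ℝ) + (cutoff (b₁ (Sum.inl i)) l : ℝ)
         + (cutoff (a₂ (Sum.inl i)) l : ℝ) + (cutoff (b₂ (Sum.inl i)) l : ℝ)) := by
    intro i
    rcases h (Sum.inl i) with h' | h'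
    · have := lin_key hk hl h'
      have n1 : (0:ℝ) ≤ (cutoff (a₂ (Sum.inl i)) l : ℕ) := by positivity
      have n2 : (0:ℝ) ≤ (cutoff (b₂ (Sum.inl i)) l : ℕ) := by positivity
      linarith
    · have := lin_key hk hl h'
      have n1 : (0:ℝ) ≤ (cutoff (a₁ (Sum.inl i)) l : ℕ) := by positivity
      have n2 : (0:ℝ) ≤ (cutoff (b₁ (Sum.inl i)) l : ℕ) := by positivity
      linarith
  have hJ : ∀ j : J, Real.log (cutoff (c (Sum.inr j)) k) ≤
      2 * (Real.log (cutoff (a₁ (Sum.inr j)) l) + Real.log (cutoff (b₁ (Sum.inr j)) l)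
         + Real.log (cutoff (a₂ (Sum.inr j)) l) + Real.log (cutoff (b₂ (Sum.inr j)) l)) := by
    intro j
    rcases h (Sum.inr j) with h' | h'
    · have := log_key hk hl h'
      have n1 := lognn (cutoff (a₂ (Sum.inr j)) l)
      have n2 := lognn (cutoff (b₂ (Sum.inr j)) l)
      linarith
    · have := log_key hk hl h'
      have n1 := lognn (cutoff (a₁ (Sum.inr j)) l)
      have n2 := lognn (cutoff (b₁ (Sum.inr j)) l)
      linarith
  have SI : (∑ i : I, (cutoff (c (Sum.inl i)) k : ℝ)) ≤
      ∑ i : I, 2 * ((cutoff (a₁ (Sum.inl i)) l : ℝ) + (cutoff (b₁ (Sum.inl i)) l : ℝ)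
         + (cutoff (a₂ (Sum.inl i)) l : ℝ) + (cutoff (b₂ (Sum.inl i)) l : ℝ)) :=
    Finset.sum_le_sum (fun i _ => hI i)
  have SJ : (∑ j : J, Real.log (cutoff (c (Sum.inr j)) k)) ≤
      ∑ j : J, 2 * (Real.log (cutoff (a₁ (Sum.inr j)) l) + Real.log (cutoff (b₁ (Sum.inr j)) l)
         + Real.log (cutoff (a₂ (Sum.inr j)) l) + Real.log (cutoff (b₂ (Sum.inr j)) l)) :=
    Finset.sum_le_sum (fun j _ => hJ j)
  calc (∑ i : I, (cutoff (c (Sum.inl i)) k : ℝ)) +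
      ∑ j : J, Real.log (cutoff (c (Sum.inr j)) k)
      ≤ (∑ i : I, 2 * ((cutoff (a₁ (Sum.inl i)) l : ℝ) + (cutoff (b₁ (Sum.inl i)) l : ℝ)
         + (cutoff (a₂ (Sum.inl i)) l : ℝ) + (cutoff (b₂ (Sum.inl i)) l : ℝ))) +
        ∑ j : J, 2 * (Real.log (cutoff (a₁ (Sum.inr j)) l) + Real.log (cutoff (b₁ (Sum.inr j)) l)
         + Real.log (cutoff (a₂ (Sum.inr j)) l) + Real.log (cutoff (b₂ (Sum.inr j)) l)) :=
        add_le_add SI SJ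
    _ = _ := by
        simp only [two_mul, Finset.sum_add_distrib]
        ring
end
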